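/- For every traceless matrix X = [[α,β],[γ,−α]] ∈ 𝔰𝔩(2,ℝ), define μ^X(z,w) = (1 − f((Im z)³|w|²))·tr(j(z)·X), where j(x+iy) = [[x/y, −(x²+y²)/y],[1/y, −x/y]], and define the vector field V_X(z,w) = (β + 2αz − γz², 3(γz − α)w) on ℍ²×ℂ (the infinitesimal generator of the SL(2,ℝ)-action: V_X(z,w) = d/ds|_{s=0} exp(sX)·(z,w)). Then V_X is the Hamiltonian vector field of μ^X with respect to ω_f: at every point of ℍ²×ℂ, ω_f(V_X, η) = dμ^X(η) for every tangent vector η ∈ ℝ⁴. -/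

import Mathlib

open Matrix

/-- The coefficient matrix `Ω_f(x,y,u,v)` of the 2-form `ω_f` on
`ℍ²×ℂ ≅ {(x,y,u,v) : y > 0}`, where `f, f′` are evaluated at `t = y³(u²+v²)`. -/
noncomputable def Omf (f : ℝ → ℝ) (x y u v : ℝ) : Matrix (Fin 4) (Fin 4) ℝ :=
  let F := f (y ^ 3 * (u ^ 2 + v ^ 2))
  let F' := deriv f (y ^ 3 * (u ^ 2 + v ^ 2))
  !![0, (-1 + F - 3 * F' * y ^ 3 * (u ^ 2 + v ^ 2)) / y ^ 2, -2 * y ^ 2 * F' * u,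
       -2 * y ^ 2 * F' * v;
     -((-1 + F - 3 * F' * y ^ 3 * (u ^ 2 + v ^ 2)) / y ^ 2), 0, 2 * y ^ 2 * F' * v,
       -2 * y ^ 2 * F' * u;
     -(-2 * y ^ 2 * F' * u), -(2 * y ^ 2 * F' * v), 0, -(4 / 3) * F' * y ^ 3;
     -(-2 * y ^ 2 * F' * v), -(-2 * y ^ 2 * F' * u), -(-(4 / 3) * F' * y ^ 3), 0]


/-- The map `j : ℍ² → M₂(ℝ)`, `j(x+iy) = [[x/y, −(x²+y²)/y], [1/y, −x/y]]`. -/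
noncomputable def jmat (z : ℂ) : Matrix (Fin 2) (Fin 2) ℝ :=
  !![z.re / z.im, -(z.re ^ 2 + z.im ^ 2) / z.im;
     1 / z.im, -z.re / z.im]

/-- The real coordinates `(x,y,u,v)` of a point/tangent vector of `ℍ²×ℂ ≅ ℂ×ℂ`. -/
def cvec (p : ℂ × ℂ) : Fin 4 → ℝ := ![p.1.re, p.1.im, p.2.re, p.2.im]

/-- The 2-form `ω_f` at the point `(z,w)`, evaluated on two tangent vectors
`ξ, η ∈ ℂ×ℂ ≅ ℝ⁴`. -/
noncomputable def oform (f : ℝ → ℝ) (z w : ℂ) (ξ η : ℂ × ℂ) : ℝ :=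
  cvec ξ ⬝ᵥ (Omf f z.re z.im w.re w.im).mulVec (cvec η)

/-- The Hamiltonian `μ^X(z,w) = (1 − f((Im z)³|w|²))·tr(j(z)·X)` for
`X = [[α,β],[γ,−α]] ∈ 𝔰𝔩(2,ℝ)`. -/
noncomputable def muX (f : ℝ → ℝ) (α β γ : ℝ) (p : ℂ × ℂ) : ℝ :=
  (1 - f (p.1.im ^ 3 * ‖p.2‖ ^ 2)) * (jmat p.1 * !![α, β; γ, -α]).trace

/-- The infinitesimal generator `V_X(z,w) = (β + 2αz − γz², 3(γz − α)w)` of the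
`SL(2,ℝ)`-action for `X = [[α,β],[γ,−α]]`. -/
noncomputable def VX (α β γ : ℝ) (p : ℂ × ℂ) : ℂ × ℂ :=
  ((β : ℂ) + 2 * (α : ℂ) * p.1 - (γ : ℂ) * p.1 ^ 2,
    3 * ((γ : ℂ) * p.1 - (α : ℂ)) * p.2)

/-- `V_X` is the Hamiltonian vector field of `μ^X` with respect to `ω_f`. -/
theorem stmt9 (f : ℝ → ℝ) (hf : ContDiff ℝ (⊤ : ℕ∞) f) (α β γ : ℝ) :
    ∀ z w : ℂ, 0 < z.im → ∀ η : ℂ × ℂ,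
      oform f z w (VX α β γ (z, w)) η = fderiv ℝ (muX f α β γ) (z, w) η := by
  intro z w hy η
  have hne : z.im ≠ 0 := ne_of_gt hy
  -- coordinate projections and their derivatives
  have hX : HasFDerivAt (fun p : ℂ × ℂ => p.1.re)
      (Complex.reCLM.comp (ContinuousLinearMap.fst ℝ ℂ ℂ)) (z, w) :=
    (Complex.reCLM.comp (ContinuousLinearMap.fst ℝ ℂ ℂ)).hasFDerivAt
  have hY : HasFDerivAt (fun p : ℂ × ℂ => p.1.im)
      (Complex.imCLM.comp (ContinuousLinearMap.fst ℝ ℂ ℂ)) (z, w) :=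
    (Complex.imCLM.comp (ContinuousLinearMap.fst ℝ ℂ ℂ)).hasFDerivAt
  have hU : HasFDerivAt (fun p : ℂ × ℂ => p.2.re)
      (Complex.reCLM.comp (ContinuousLinearMap.snd ℝ ℂ ℂ)) (z, w) :=
    (Complex.reCLM.comp (ContinuousLinearMap.snd ℝ ℂ ℂ)).hasFDerivAt
  have hV : HasFDerivAt (fun p : ℂ × ℂ => p.2.im)
      (Complex.imCLM.comp (ContinuousLinearMap.snd ℝ ℂ ℂ)) (z, w) :=
    (Complex.imCLM.comp (ContinuousLinearMap.snd ℝ ℂ ℂ)).hasFDerivAt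
  -- derivative of t = y³(u²+v²)
  have ht := ((hY.mul hY).mul hY).mul ((hU.mul hU).add (hV.mul hV))
  -- derivative of f ∘ t
  have hft := (HasDerivAt.comp_hasFDerivAt (z, w)
      ((hf.differentiable (by simp) (z.im * z.im * z.im * (w.re * w.re + w.im * w.im))).hasDerivAt)
      ht)
  -- derivative of 1 - f(t)
  have hnum := (hasFDerivAt_const (1 : ℝ) ((z, w) : ℂ × ℂ)).sub hft
  -- derivative of y⁻¹
  have hinv := HasDerivAt.comp_hasFDerivAt (z, w) (hasDerivAt_inv hne) hY
  -- derivative of 2αx - γ(x² + y²) + β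
  have hN := (((hX.const_mul (2 * α)).sub
      (((hX.mul hX).add (hY.mul hY)).const_mul γ)).add
      (hasFDerivAt_const β ((z, w) : ℂ × ℂ)))
  -- full derivative of the coordinate expression of μ
  have hg0 := hnum.mul (hN.mul hinv)
  have heq : muX f α β γ =ᶠ[nhds ((z, w) : ℂ × ℂ)]
      (fun p : ℂ × ℂ => (1 - (f ∘ fun p : ℂ × ℂ =>
          p.1.im * p.1.im * p.1.im * (p.2.re * p.2.re + p.2.im * p.2.im)) p) *
        ((2 * α * p.1.re - γ * (p.1.re * p.1.re + p.1.im * p.1.im) + β) *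
          (fun s : ℝ => s⁻¹) (p.1.im))) := by
    filter_upwards with q
    simp only [muX, jmat, Matrix.trace, Matrix.mul_apply, Fin.sum_univ_two, Matrix.diag_apply,
      Complex.sq_norm, Complex.normSq_apply, Function.comp,
      Matrix.cons_val', Matrix.cons_val_zero, Matrix.cons_val_one, Matrix.head_cons,
      Matrix.empty_val', Matrix.cons_val_fin_one, Matrix.head_fin_const, Matrix.of_apply]
    have h3 : q.1.im ^ 3 * (q.2.re * q.2.re + q.2.im * q.2.im)
        = q.1.im * q.1.im * q.1.im * (q.2.re * q.2.re + q.2.im * q.2.im) := by ring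
    rw [h3]
    field_simp
    ring
  have hmu := hg0.congr_of_eventuallyEq heq
  rw [hmu.fderiv]
  have harg : z.im ^ 3 * (w.re ^ 2 + w.im ^ 2)
      = z.im * z.im * z.im * (w.re * w.re + w.im * w.im) := by ring
  simp only [oform, Omf, VX, cvec, Matrix.mulVec, dotProduct, Fin.sum_univ_four,
    Fin.isValue, Matrix.cons_val', Matrix.cons_val_zero, Matrix.cons_val_one, Matrix.head_cons,
    Matrix.empty_val', Matrix.cons_val_fin_one, Matrix.head_fin_const,
    Matrix.cons_val_two, Matrix.cons_val_three, Matrix.tail_cons, Matrix.of_apply,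
    Complex.add_re, Complex.add_im, Complex.sub_re, Complex.sub_im, Complex.mul_re,
    Complex.mul_im, Complex.ofReal_re, Complex.ofReal_im, Complex.re_ofNat, Complex.im_ofNat,
    ContinuousLinearMap.add_apply, ContinuousLinearMap.sub_apply,
    ContinuousLinearMap.smul_apply, ContinuousLinearMap.coe_comp', Function.comp,
    ContinuousLinearMap.coe_fst', ContinuousLinearMap.coe_snd',
    Complex.reCLM_apply, Complex.imCLM_apply, ContinuousLinearMap.zero_apply,
    smul_eq_mul, pow_two, harg, Pi.mul_apply, Pi.add_apply, Pi.sub_apply, Pi.pow_apply,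
    Function.comp_apply]
  field_simp
  ring_nf
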